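/- arXiv:2003.13001 — 6 statements merged into one kernel-verified Lean document; each statement's English description precedes it below -/
import Mathlib

section
/- Let f: R^d -> R be convex and L-Lipschitz differentiable with nonempty solution set, and let g_k = nabla f(x_k). Suppose hat{g}_k satisfies ||g_k - hat{g}_k||_2^2 <= eps_rel ||g_k||_2^2 + eps_abs with 0 <= eps_rel < 1, and let x_{k+1} = x_k - (1/L) hat{g}_k. If in addition ||x_k - P_*(x_k)||_2 <= R for all k, where P_* is projection onto the solution set, then the errors e_k = f(x_k) - min f satisfy e_{k+1} <= e_k - ((1-eps_rel)/(2 L R^2)) e_k^2 + eps_abs/(2L). -/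
/-!
The descent lemma for an `L`-smooth function turns the step `x - ĝ / L` into a decrease of
`‖∇f x‖² / (2L)`, spoiled by at most `‖∇f x - ĝ‖² / (2L) ≤ (εrel ‖∇f x‖² + εabs) / (2L)`.
Convexity bounds the gap from below by the gradient: for a minimizer `y` with `‖x - y‖ ≤ R`,
`f x - f y ≤ ⟪∇f x, x - y⟫ ≤ R ‖∇f x‖`, so `‖∇f x‖² ≥ e² / R²`.
-/

open Set InnerProductSpace

section Smooth

variable {F : Type*} [NormedAddCommGroup F] [InnerProductSpace ℝ F] [CompleteSpace F]
  {f : F → ℝ}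

theorem HasGradientAt.hasDerivAt_comp_add_smul {g x v : F} {t : ℝ}
    (h : HasGradientAt f g (x + t • v)) :
    HasDerivAt (fun s : ℝ ↦ f (x + s • v)) ⟪g, v⟫_ℝ t := by
  have hline : HasDerivAt (fun s : ℝ ↦ x + s • v) v t := by
    simpa using ((hasDerivAt_id t).smul_const v).const_add x
  exact (hasGradientAt_iff_hasFDerivAt.mp h).comp_hasDerivAt t hline

theorem ConvexOn.inner_gradient_sub_le (hconv : ConvexOn ℝ univ f)
    (hdiff : Differentiable ℝ f) (x y : F) :
    ⟪gradient f x, y - x⟫_ℝ ≤ f y - f x := by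
  have hline : ConvexOn ℝ univ (fun s : ℝ ↦ f (x + s • (y - x))) := by
    simpa [Function.comp_def, AffineMap.lineMap_apply, add_comm] using
      hconv.comp_affineMap (AffineMap.lineMap x y)
  have hderiv : HasDerivAt (fun s : ℝ ↦ f (x + s • (y - x))) ⟪gradient f x, y - x⟫_ℝ 0 :=
    HasGradientAt.hasDerivAt_comp_add_smul (by simpa using (hdiff x).hasGradientAt)
  have := hline.le_slope_of_hasDerivAt (mem_univ 0) (mem_univ 1) one_pos hderiv
  simpa only [slope_def_field, zero_smul, add_zero, one_smul, add_sub_cancel, sub_zero,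
    div_one] using this

theorem ConvexOn.sub_le_norm_gradient_mul (hconv : ConvexOn ℝ univ f)
    (hdiff : Differentiable ℝ f) (x y : F) : f x - f y ≤ ‖gradient f x‖ * ‖x - y‖ := by
  have hsupport := hconv.inner_gradient_sub_le hdiff x y
  have hcs := real_inner_le_norm (gradient f x) (x - y)
  rw [← neg_sub x y, inner_neg_right] at hsupport
  linarith

variable {L : ℝ}

theorem inner_gradient_add_smul_le_of_lipschitz
    (hlip : ∀ x y, ‖gradient f x - gradient f y‖ ≤ L * ‖x - y‖) {t : ℝ} (ht : 0 ≤ t)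
    (x v : F) : ⟪gradient f (x + t • v), v⟫_ℝ ≤ ⟪gradient f x, v⟫_ℝ + L * t * ‖v‖ ^ 2 := by
  have := calc
    ⟪gradient f (x + t • v) - gradient f x, v⟫_ℝ
        ≤ ‖gradient f (x + t • v) - gradient f x‖ * ‖v‖ := real_inner_le_norm _ _
    _ ≤ L * ‖t • v‖ * ‖v‖ := by
        gcongr
        simpa using hlip (x + t • v) x
    _ = L * t * ‖v‖ ^ 2 := by rw [norm_smul, Real.norm_of_nonneg ht]; ring
  rwa [inner_sub_left, sub_le_iff_le_add'] at this

theorem apply_add_le_of_lipschitz_gradient (hdiff : Differentiable ℝ f)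
    (hlip : ∀ x y, ‖gradient f x - gradient f y‖ ≤ L * ‖x - y‖) (x v : F) :
    f (x + v) ≤ f x + ⟪gradient f x, v⟫_ℝ + L / 2 * ‖v‖ ^ 2 := by
  have hφ (t : ℝ) : HasDerivAt (fun s : ℝ ↦ f (x + s • v)) ⟪gradient f (x + t • v), v⟫_ℝ t :=
    (hdiff _).hasGradientAt.hasDerivAt_comp_add_smul
  have hB (t : ℝ) :
      HasDerivAt (fun s : ℝ ↦ f x + s * ⟪gradient f x, v⟫_ℝ + L / 2 * s ^ 2 * ‖v‖ ^ 2)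
        (⟪gradient f x, v⟫_ℝ + L * t * ‖v‖ ^ 2) t := by
    have := (((hasDerivAt_id t).mul_const ⟪gradient f x, v⟫_ℝ).const_add (f x)).add
      (((hasDerivAt_pow 2 t).const_mul (L / 2)).mul_const (‖v‖ ^ 2))
    exact this.congr_deriv (by push_cast; ring)
  have := image_le_of_deriv_right_le_deriv_boundary
    (fun t _ ↦ (hφ t).continuousAt.continuousWithinAt) (fun t _ ↦ (hφ t).hasDerivWithinAt)
    (by simp) (fun t _ ↦ (hB t).continuousAt.continuousWithinAt)
    (fun t _ ↦ (hB t).hasDerivWithinAt)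
    (fun t ht ↦ inner_gradient_add_smul_le_of_lipschitz hlip ht.1 x v) (right_mem_Icc.2 zero_le_one)
  simpa using this

theorem apply_sub_one_div_smul_le_of_lipschitz_gradient (hL : 0 < L)
    (hdiff : Differentiable ℝ f) (hlip : ∀ x y, ‖gradient f x - gradient f y‖ ≤ L * ‖x - y‖)
    (x ĝ : F) :
    f (x - (1 / L) • ĝ) ≤
      f x - 1 / (2 * L) * ‖gradient f x‖ ^ 2 + 1 / (2 * L) * ‖gradient f x - ĝ‖ ^ 2 := by
  have hdesc := apply_add_le_of_lipschitz_gradient hdiff hlip x (-(1 / L) • ĝ)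
  rw [neg_smul, ← sub_eq_add_neg, inner_neg_right, real_inner_smul_right,
    norm_neg, norm_smul, Real.norm_of_nonneg (by positivity)] at hdesc
  rw [norm_sub_sq_real]
  convert hdesc using 1
  field_simp
  ring

end Smooth

theorem inexact_gd_one_step_general {d : ℕ} (L R εrel εabs : ℝ) (hL : 0 < L)
    (hrel1 : εrel < 1)
    (f : EuclideanSpace ℝ (Fin d) → ℝ)
    (hconv : ConvexOn ℝ Set.univ f)
    (hdiff : Differentiable ℝ f)
    (hlip : ∀ x y, ‖gradient f x - gradient f y‖ ≤ L * ‖x - y‖)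
    (xstar : EuclideanSpace ℝ (Fin d)) (hmin : ∀ y, f xstar ≤ f y)
    (x ghat : ℕ → EuclideanSpace ℝ (Fin d))
    (hstep : ∀ k, x (k + 1) = x k - (1 / L) • ghat k)
    (herr : ∀ k, ‖gradient f (x k) - ghat k‖ ^ 2 ≤
      εrel * ‖gradient f (x k)‖ ^ 2 + εabs)
    (hdist : ∀ k, ∃ y, (∀ z, f y ≤ f z) ∧ ‖x k - y‖ ≤ R) :
    ∀ k, f (x (k + 1)) - f xstar ≤
      (f (x k) - f xstar)
        - ((1 - εrel) / (2 * L * R ^ 2)) * (f (x k) - f xstar) ^ 2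
        + εabs / (2 * L) := by
  intro k
  have hone := apply_sub_one_div_smul_le_of_lipschitz_gradient hL hdiff hlip (x k) (ghat k)
  rw [← hstep k] at hone
  set g := gradient f (x k)
  set e := f (x k) - f xstar 
  obtain ⟨y, hy, hyR⟩ := hdist k
  have he : 0 ≤ e := sub_nonneg.2 (hmin (x k))
  have hgap : e ≤ ‖g‖ * R := calc
    e = f (x k) - f y := by rw [le_antisymm (hy xstar) (hmin y)]
    _ ≤ ‖g‖ * ‖x k - y‖ := hconv.sub_le_norm_gradient_mul hdiff (x k) y
    _ ≤ ‖g‖ * R := by gcongr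
  have hgap_sq : e ^ 2 / R ^ 2 ≤ ‖g‖ ^ 2 :=
    div_le_of_le_mul₀ (sq_nonneg R) (sq_nonneg _) (by rw [← mul_pow]; gcongr)
  have hdecrease : (1 - εrel) / (2 * L * R ^ 2) * e ^ 2 ≤ (1 - εrel) / (2 * L) * ‖g‖ ^ 2 := by
    rw [show (1 - εrel) / (2 * L * R ^ 2) * e ^ 2 = (1 - εrel) / (2 * L) * (e ^ 2 / R ^ 2) by
      ring]
    gcongr
  have hinexact : 1 / (2 * L) * ‖g - ghat k‖ ^ 2 ≤ 1 / (2 * L) * (εrel * ‖g‖ ^ 2 + εabs) := by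
    gcongr
    exact herr k
  calc f (x (k + 1)) - f xstar
      ≤ e - 1 / (2 * L) * ‖g‖ ^ 2 + 1 / (2 * L) * (εrel * ‖g‖ ^ 2 + εabs) := by linarith
    _ = e - (1 - εrel) / (2 * L) * ‖g‖ ^ 2 + εabs / (2 * L) := by ring
    _ ≤ e - (1 - εrel) / (2 * L * R ^ 2) * e ^ 2 + εabs / (2 * L) := by linarith

/-- One-step inequality for inexact gradient descent with relative and absolute errors. -/
theorem inexact_gd_one_step {d : ℕ} (L R εrel εabs : ℝ) (hL : 0 < L) (hR : 0 < R)
    (hrel0 : 0 ≤ εrel) (hrel1 : εrel < 1) (habs : 0 ≤ εabs)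
    (f : EuclideanSpace ℝ (Fin d) → ℝ)
    (hconv : ConvexOn ℝ Set.univ f)
    (hdiff : Differentiable ℝ f)
    (hlip : ∀ x y, ‖gradient f x - gradient f y‖ ≤ L * ‖x - y‖)
    (xstar : EuclideanSpace ℝ (Fin d)) (hmin : ∀ y, f xstar ≤ f y)
    (x ghat : ℕ → EuclideanSpace ℝ (Fin d))
    (hstep : ∀ k, x (k + 1) = x k - (1 / L) • ghat k)
    (herr : ∀ k, ‖gradient f (x k) - ghat k‖ ^ 2 ≤
      εrel * ‖gradient f (x k)‖ ^ 2 + εabs)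
    (hdist : ∀ k, ∃ y, (∀ z, f y ≤ f z) ∧ ‖x k - y‖ ≤ R) :
    ∀ k, f (x (k + 1)) - f xstar ≤
      (f (x k) - f xstar)
        - ((1 - εrel) / (2 * L * R ^ 2)) * (f (x k) - f xstar) ^ 2
        + εabs / (2 * L) :=
  inexact_gd_one_step_general L R εrel εabs hL hrel1 f hconv hdiff hlip xstar hmin x ghat hstep herr
    hdist
end

section
/- Let f: R^d -> R be convex, L-Lipschitz differentiable, and restricted nu-strongly convex, meaning f(x) - min f >= (nu/2) ||x - P_*(x)||_2^2 for all x. Suppose the inexact gradients satisfy ||g_k - hat{g}_k||_2^2 <= eps_rel ||g_k||_2^2 + eps_abs with eps_rel < 1, and x_{k+1} = x_k - (1/L) hat{g}_k. Then e_k = f(x_k) - min f satisfies e_k <= (1 - (1-eps_rel) nu / (4L))^k e_0 + 2 eps_abs / (nu (1 - eps_rel)). -/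
/-!
Each inexact step is an exact gradient step perturbed by the error `ĝ - ∇f`: the descent lemma
gives `e_{k+1} ≤ e_k - ‖∇f‖²/(2L) + ‖∇f - ĝ‖²/(2L)`, hence
`e_{k+1} ≤ e_k - (1 - εrel)‖∇f‖²/(2L) + εabs/(2L)`. Convexity gives
`e_k ≤ ‖∇f(x_k)‖ ‖x_k - P_*(x_k)‖`, which together with quadratic growth yields the
Polyak–Łojasiewicz inequality `ν e_k / 2 ≤ ‖∇f(x_k)‖²`. So `e_{k+1} ≤ ρ e_k + εabs/(2L)` with
`ρ = 1 - (1 - εrel)ν/(4L)`, and unrolling this affine recursion gives the bound, whose constant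
term is its fixed point.
-/

open scoped RealInnerProductSpace Gradient

section GradientLipschitz

variable {E : Type*} [NormedAddCommGroup E] [InnerProductSpace ℝ E] [CompleteSpace E]
  {f : E → ℝ}

lemma hasDerivAt_comp_add_smul {x v : E} {t : ℝ} (hf : DifferentiableAt ℝ f (x + t • v)) :
    HasDerivAt (fun s : ℝ => f (x + s • v)) ⟪∇ f (x + t • v), v⟫ t := by
  have hline : HasDerivAt (fun s : ℝ => x + s • v) v t := by
    simpa using ((hasDerivAt_id t).smul_const v).const_add x
  exact hf.hasGradientAt.hasFDerivAt.comp_hasDerivAt t hline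

lemma ConvexOn.add_inner_gradient_le (hconv : ConvexOn ℝ Set.univ f) {x : E}
    (hf : DifferentiableAt ℝ f x) (y : E) : f x + ⟪∇ f x, y - x⟫ ≤ f y := by
  have hline : ConvexOn ℝ Set.univ (fun t : ℝ => f (x + t • (y - x))) := by
    have hcomp : (fun t : ℝ => f (x + t • (y - x))) = f ∘ AffineMap.lineMap x y := by
      ext t
      simp [AffineMap.lineMap_apply, add_comm]
    simpa [hcomp] using hconv.comp_affineMap (AffineMap.lineMap x y)
  have hderiv : HasDerivAt (fun t : ℝ => f (x + t • (y - x))) ⟪∇ f x, y - x⟫ 0 := by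
    simpa using hasDerivAt_comp_add_smul (v := y - x) (t := 0) (by simpa using hf)
  have := hline.le_slope_of_hasDerivAt (Set.mem_univ 0) (Set.mem_univ 1) one_pos hderiv
  simp only [slope, sub_zero, inv_one, one_smul, zero_smul, add_zero, add_sub_cancel,
    smul_eq_mul, one_mul, vsub_eq_sub] at this
  linarith

lemma IsLocalMin.gradient_eq_zero {z : E} (h : IsLocalMin f z) : ∇ f z = 0 := by
  simp [gradient, h.fderiv_eq_zero]

lemma le_add_inner_gradient_add_sq_of_lipschitz (hf : Differentiable ℝ f) {L : ℝ}
    (hlip : ∀ x y, ‖∇ f x - ∇ f y‖ ≤ L * ‖x - y‖) (x y : E) :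
    f y ≤ f x + ⟪∇ f x, y - x⟫ + L / 2 * ‖y - x‖ ^ 2 := by
  set v := y - x
  -- `φ' t = ⟪∇ f (x + t v) - ∇ f x, v⟫ - L t ‖v‖² ≤ 0` on `[0, 1]`
  set φ : ℝ → ℝ := fun t => f (x + t • v) - t * ⟪∇ f x, v⟫ - L * ‖v‖ ^ 2 * t ^ 2 / 2
  have hφ : ∀ t, HasDerivAt φ (⟪∇ f (x + t • v), v⟫ - ⟪∇ f x, v⟫ - L * ‖v‖ ^ 2 * t) t := by
    intro t
    have hquad := ((hasDerivAt_pow 2 t).const_mul (L * ‖v‖ ^ 2)).div_const 2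
    refine ((hasDerivAt_comp_add_smul (hf _)).sub ((hasDerivAt_id t).mul_const _)).sub
      hquad |>.congr_deriv ?_
    simp only [one_mul, Nat.cast_ofNat, Nat.add_one_sub_one, pow_one]
    ring
  have hanti : AntitoneOn φ (Set.Icc 0 1) := by
    refine antitoneOn_of_hasDerivWithinAt_nonpos (convex_Icc 0 1)
      (fun t _ => (hφ t).continuousAt.continuousWithinAt)
      (fun t _ => (hφ t).hasDerivWithinAt) fun t ht => ?_
    rw [interior_Icc] at ht
    have hcs : ⟪∇ f (x + t • v) - ∇ f x, v⟫ ≤ L * (t * ‖v‖) * ‖v‖ :=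
      calc ⟪∇ f (x + t • v) - ∇ f x, v⟫ ≤ ‖∇ f (x + t • v) - ∇ f x‖ * ‖v‖ :=
            real_inner_le_norm _ _
        _ ≤ L * ‖x + t • v - x‖ * ‖v‖ := by gcongr; exact hlip _ _
        _ = L * (t * ‖v‖) * ‖v‖ := by
            rw [add_sub_cancel_left, norm_smul, Real.norm_of_nonneg ht.1.le]
    rw [inner_sub_left] at hcs
    nlinarith
  have := hanti (Set.left_mem_Icc.mpr zero_le_one) (Set.right_mem_Icc.mpr zero_le_one)
    zero_le_one
  simp only [φ, v, one_smul, zero_smul, add_zero, add_sub_cancel, one_mul, zero_mul, one_pow,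
    mul_one, sub_zero, ne_eq, OfNat.ofNat_ne_zero, not_false_eq_true, zero_pow, mul_zero,
    zero_div] at this
  linarith

lemma le_of_quadratic_growth_of_lipschitz (hf : Differentiable ℝ f) {L ν : ℝ}
    (hlip : ∀ x y, ‖∇ f x - ∇ f y‖ ≤ L * ‖x - y‖) {y z : E} (hz : ∀ w, f z ≤ f w)
    (hgrow : ν / 2 * ‖y - z‖ ^ 2 ≤ f y - f z) (hy : f z < f y) : ν ≤ L := by
  have hup := le_add_inner_gradient_add_sq_of_lipschitz hf hlip z y
  rw [IsLocalMin.gradient_eq_zero (Filter.Eventually.of_forall hz), inner_zero_left,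
    add_zero] at hup
  have hyz : 0 < ‖y - z‖ ^ 2 := by
    refine pow_pos (norm_pos_iff.mpr (sub_ne_zero.mpr ?_)) 2
    rintro rfl
    exact hy.false
  nlinarith

lemma ConvexOn.mul_sub_le_sq_norm_gradient (hconv : ConvexOn ℝ Set.univ f) {x z : E}
    (hf : DifferentiableAt ℝ f x) {ν : ℝ} (hz : ∀ w, f z ≤ f w)
    (hgrow : ν / 2 * ‖x - z‖ ^ 2 ≤ f x - f z) : ν / 2 * (f x - f z) ≤ ‖∇ f x‖ ^ 2 := by
  have he : 0 ≤ f x - f z := sub_nonneg.mpr (hz x)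
  have hgap : f x - f z ≤ ‖∇ f x‖ * ‖x - z‖ := by
    have h1 := hconv.add_inner_gradient_le hf z
    have h2 : ⟪∇ f x, x - z⟫ ≤ ‖∇ f x‖ * ‖x - z‖ := real_inner_le_norm _ _
    rw [← neg_sub, inner_neg_right] at h1
    linarith
  rcases he.eq_or_lt with he0 | hepos
  · rw [← he0, mul_zero]
    positivity
  · refine le_of_mul_le_mul_right ?_ hepos
    have hsq := mul_self_le_mul_self he hgap
    rcases le_total ν 0 with hν | hν
    · nlinarith [sq_nonneg ‖∇ f x‖]
    · nlinarith [mul_le_mul_of_nonneg_left hgrow (sq_nonneg ‖∇ f x‖)]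

lemma le_sub_sq_norm_gradient_add_sq_norm_error (hf : Differentiable ℝ f) {L : ℝ} (hL : 0 < L)
    (hlip : ∀ x y, ‖∇ f x - ∇ f y‖ ≤ L * ‖x - y‖) (x ĝ : E) :
    f (x - (1 / L) • ĝ) ≤ f x - ‖∇ f x‖ ^ 2 / (2 * L) + ‖∇ f x - ĝ‖ ^ 2 / (2 * L) := by
  have hdesc := le_add_inner_gradient_add_sq_of_lipschitz hf hlip x (x - (1 / L) • ĝ)
  rw [sub_sub_cancel_left, inner_neg_right, real_inner_smul_right, norm_neg, norm_smul,
    Real.norm_of_nonneg (by positivity)] at hdesc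
  rw [norm_sub_sq_real]
  convert hdesc using 1
  field_simp
  ring

lemma sub_le_mul_sub_add_of_inexact_gradient (hf : Differentiable ℝ f) {L : ℝ} (hL : 0 < L)
    (hlip : ∀ x y, ‖∇ f x - ∇ f y‖ ≤ L * ‖x - y‖) {ν εrel εabs : ℝ} (hrel : εrel ≤ 1)
    {x ĝ : E} (herr : ‖∇ f x - ĝ‖ ^ 2 ≤ εrel * ‖∇ f x‖ ^ 2 + εabs) {m : ℝ}
    (hPL : ν / 2 * (f x - m) ≤ ‖∇ f x‖ ^ 2) :
    f (x - (1 / L) • ĝ) - m ≤ (1 - (1 - εrel) * ν / (4 * L)) * (f x - m) + εabs / (2 * L) := by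
  have hstep := le_sub_sq_norm_gradient_add_sq_norm_error hf hL hlip x ĝ
  have herr' : ‖∇ f x - ĝ‖ ^ 2 / (2 * L) ≤ (εrel * ‖∇ f x‖ ^ 2 + εabs) / (2 * L) := by
    gcongr
  have hPL' :
      (1 - εrel) * (ν / 2 * (f x - m)) / (2 * L) ≤ (1 - εrel) * ‖∇ f x‖ ^ 2 / (2 * L) := by
    gcongr
  have hsplit : (1 - (1 - εrel) * ν / (4 * L)) * (f x - m) + εabs / (2 * L) =
      f x - m - (1 - εrel) * (ν / 2 * (f x - m)) / (2 * L) + εabs / (2 * L) := by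
    field_simp; ring
  have hsplit' : (εrel * ‖∇ f x‖ ^ 2 + εabs) / (2 * L) =
      ‖∇ f x‖ ^ 2 / (2 * L) - (1 - εrel) * ‖∇ f x‖ ^ 2 / (2 * L) + εabs / (2 * L) := by
    field_simp; ring
  linarith

end GradientLipschitz

lemma le_pow_mul_add_of_le_mul_add {u : ℕ → ℝ} {ρ c C : ℝ} (hρ : 0 ≤ ρ) (hC : 0 ≤ C)
    (hfix : ρ * C + c ≤ C) (h : ∀ k, u (k + 1) ≤ ρ * u k + c) :
    ∀ k, u k ≤ ρ ^ k * u 0 + C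
  | 0 => by simpa using hC
  | k + 1 =>
    calc u (k + 1) ≤ ρ * u k + c := h k
      _ ≤ ρ * (ρ ^ k * u 0 + C) + c := by
        gcongr
        exact le_pow_mul_add_of_le_mul_add hρ hC hfix h k
      _ ≤ ρ ^ (k + 1) * u 0 + C := by rw [pow_succ]; linarith

/-- Linear convergence of inexact gradient descent under restricted strong convexity. -/
theorem inexact_gd_linear_convergence {d : ℕ} (L ν εrel εabs : ℝ)
    (hL : 0 < L) (hν : 0 < ν) (hrel0 : 0 ≤ εrel) (hrel1 : εrel < 1) (habs : 0 ≤ εabs)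
    (f : EuclideanSpace ℝ (Fin d) → ℝ)
    (hconv : ConvexOn ℝ Set.univ f)
    (hdiff : Differentiable ℝ f)
    (hlip : ∀ x y, ‖gradient f x - gradient f y‖ ≤ L * ‖x - y‖)
    (xstar : EuclideanSpace ℝ (Fin d)) (hmin : ∀ y, f xstar ≤ f y)
    (hrsc : ∀ y : EuclideanSpace ℝ (Fin d), ∃ z,
      (∀ w, f z ≤ f w) ∧ (∀ w, (∀ w', f w ≤ f w') → ‖y - z‖ ≤ ‖y - w‖) ∧
      ν / 2 * ‖y - z‖ ^ 2 ≤ f y - f xstar)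
    (x ghat : ℕ → EuclideanSpace ℝ (Fin d))
    (hstep : ∀ k, x (k + 1) = x k - (1 / L) • ghat k)
    (herr : ∀ k, ‖gradient f (x k) - ghat k‖ ^ 2 ≤
      εrel * ‖gradient f (x k)‖ ^ 2 + εabs) :
    ∀ k, f (x k) - f xstar ≤
      (1 - (1 - εrel) * ν / (4 * L)) ^ k * (f (x 0) - f xstar)
        + 2 * εabs / (ν * (1 - εrel)) := by
  have hrel : 0 < 1 - εrel := by linarith
  have hC : 0 ≤ 2 * εabs / (ν * (1 - εrel)) := by positivity
  -- Unless `f` is constant, quadratic growth against the smoothness bound forces `ν ≤ L`,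
  -- which makes the contraction factor nonnegative.
  by_cases hconst : ∀ y, f y = f xstar
  · intro k
    simpa [hconst] using hC
  push Not at hconst
  obtain ⟨y, hy⟩ := hconst
  have hgrowth : ∀ y, ∃ z, (∀ w, f z ≤ f w) ∧ f z = f xstar ∧
      ν / 2 * ‖y - z‖ ^ 2 ≤ f y - f z := by
    intro y
    obtain ⟨z, hz, -, hgrow⟩ := hrsc y
    have hzx : f z = f xstar := le_antisymm (hz xstar) (hmin z)
    exact ⟨z, hz, hzx, hzx ▸ hgrow⟩
  have hνL : ν ≤ L := by
    obtain ⟨z, hz, hzx, hgrow⟩ := hgrowth y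
    exact le_of_quadratic_growth_of_lipschitz hdiff hlip hz hgrow
      ((hz y).lt_of_ne (by rw [hzx]; exact Ne.symm hy))
  have hPL : ∀ y, ν / 2 * (f y - f xstar) ≤ ‖gradient f y‖ ^ 2 := by
    intro y
    obtain ⟨z, hz, hzx, hgrow⟩ := hgrowth y
    rw [← hzx]
    exact hconv.mul_sub_le_sq_norm_gradient (hdiff y) hz hgrow
  refine le_pow_mul_add_of_le_mul_add (u := fun k => f (x k) - f xstar)
    (c := εabs / (2 * L)) ?_ hC ?_ fun k => ?_
  · rw [sub_nonneg, div_le_one (by positivity)]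
    nlinarith
  · apply le_of_eq
    field_simp
    ring
  · rw [hstep k]
    exact sub_le_mul_sub_add_of_inexact_gradient hdiff hL hlip hrel1.le (herr k) (hPL _)
end

section
/- (Descent lemma for inexact proximal gradient, version 3) Under the same setting, F(x_{k+1}) <= F(x_k) - (1/(12L)) ||tilde{Delta}_k||_2^2 + (5/(6L)) ||g_k - hat{g}_k||_2^2, where tilde{Delta}_k = -(tilde{nabla} r(x_{k+1}) + nabla f(x_{k+1})). -/
open scoped RealInnerProductSpace

/-!
Write `n = v + ĝ`, so that the step is `x_{k+1} - x_k = -n / L`. The quadratic bound for an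
`L`-smooth `f` holds both at `x_k` and, read backwards, at `x_{k+1}`; the subgradient inequality
bounds `r(x_{k+1}) - r(x_k)` by `⟪v, x_{k+1} - x_k⟫`. Averaging the two bounds on `f` with weights
`5/6` and `1/6` and adding the one on `r` leaves an expression in `n`, `e = ∇f(x_k) - ĝ` and
`w = ∇f(x_{k+1}) - ∇f(x_k)`, where `‖w‖ ≤ ‖n‖` by the Lipschitz bound. Since
`v + ∇f(x_{k+1}) = n + e + w`, the claim reduces to an inequality between inner products that is a
consequence of `(2‖n‖ - 3‖e‖)² ≥ 0`.
-/

section LipschitzGradient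

variable {F : Type*} [NormedAddCommGroup F] [InnerProductSpace ℝ F] [CompleteSpace F]
  {L : ℝ} {f : F → ℝ}

theorem abs_sub_sub_inner_gradient_le (hf : Differentiable ℝ f)
    (hlip : ∀ x y, ‖gradient f x - gradient f y‖ ≤ L * ‖x - y‖) (x h : F) :
    |f (x + h) - f x - ⟪gradient f x, h⟫| ≤ L / 2 * ‖h‖ ^ 2 := by
  set φ : ℝ → ℝ := fun t => f (x + t • h) - f x - t * ⟪gradient f x, h⟫
  have hφ : ∀ t, HasDerivAt φ ⟪gradient f (x + t • h) - gradient f x, h⟫ t := by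
    intro t
    have hline : HasDerivAt (fun t : ℝ => x + t • h) h t := by
      simpa using ((hasDerivAt_id t).smul_const h).const_add x
    have hcomp := (hf (x + t • h)).hasGradientAt.hasFDerivAt.comp_hasDerivAt t hline
    rw [InnerProductSpace.toDual_apply_apply] at hcomp
    rw [inner_sub_left]
    exact (hcomp.sub_const (f x)).sub
      (by simpa using (hasDerivAt_id t).mul_const ⟪gradient f x, h⟫)
  have hB : ∀ t, HasDerivAt (fun t : ℝ => L / 2 * t ^ 2 * ‖h‖ ^ 2) (L * t * ‖h‖ ^ 2) t := fun t =>
    (((hasDerivAt_pow 2 t).const_mul (L / 2)).mul_const _).congr_deriv (by push_cast; ring)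
  have hbound : ∀ t ∈ Set.Ico (0 : ℝ) 1,
      ‖⟪gradient f (x + t • h) - gradient f x, h⟫‖ ≤ L * t * ‖h‖ ^ 2 := by
    rintro t ⟨ht, -⟩
    calc ‖⟪gradient f (x + t • h) - gradient f x, h⟫‖
        ≤ ‖gradient f (x + t • h) - gradient f x‖ * ‖h‖ := norm_inner_le_norm _ _
      _ ≤ L * ‖x + t • h - x‖ * ‖h‖ := by gcongr; exact hlip _ _
      _ = L * t * ‖h‖ ^ 2 := by
        rw [add_sub_cancel_left, norm_smul, Real.norm_of_nonneg ht]; ring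
  have := image_norm_le_of_norm_deriv_right_le_deriv_boundary
    (fun t _ => (hφ t).continuousAt.continuousWithinAt) (fun t _ => (hφ t).hasDerivWithinAt)
    (by simp [φ]) hB hbound (Set.right_mem_Icc.2 zero_le_one)
  simpa [φ] using this

theorem le_add_inner_gradient_add_sq (hf : Differentiable ℝ f)
    (hlip : ∀ x y, ‖gradient f x - gradient f y‖ ≤ L * ‖x - y‖) (x y : F) :
    f y ≤ f x + ⟪gradient f x, y - x⟫ + L / 2 * ‖y - x‖ ^ 2 := by
  have := (abs_le.1 (abs_sub_sub_inner_gradient_le hf hlip x (y - x))).2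
  rw [add_sub_cancel] at this
  linarith

theorem le_add_inner_gradient_add_sq' (hf : Differentiable ℝ f)
    (hlip : ∀ x y, ‖gradient f x - gradient f y‖ ≤ L * ‖x - y‖) (x y : F) :
    f y ≤ f x + ⟪gradient f y, y - x⟫ + L / 2 * ‖y - x‖ ^ 2 := by
  have := (abs_le.1 (abs_sub_sub_inner_gradient_le hf hlip y (x - y))).1
  rw [add_sub_cancel, ← neg_sub y x, inner_neg_right, norm_neg] at this
  linarith

end LipschitzGradient

section InnerProductInequalities

variable {F : Type*} [NormedAddCommGroup F] [InnerProductSpace ℝ F]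

theorem norm_add_add_sq_le_of_norm_le {n e w : F} (hw : ‖w‖ ≤ ‖n‖) :
    ‖n + e + w‖ ^ 2 ≤ 6 * ‖n‖ ^ 2 + 12 * ⟪e, n⟫ + 2 * ⟪w, n⟫ + 10 * ‖e‖ ^ 2 := by
  have hexpand : ‖n + e + w‖ ^ 2 =
      ‖n‖ ^ 2 + ‖e‖ ^ 2 + ‖w‖ ^ 2 + 2 * ⟪e, n⟫ + 2 * ⟪w, n⟫ + 2 * ⟪e, w⟫ := by
    rw [norm_add_sq_real, norm_add_sq_real, inner_add_left, real_inner_comm n e,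
      real_inner_comm n w]
    ring
  have hen : -(‖e‖ * ‖n‖) ≤ ⟪e, n⟫ := neg_le_of_abs_le (abs_real_inner_le_norm e n)
  have hew : ⟪e, w⟫ ≤ ‖e‖ * ‖n‖ :=
    (real_inner_le_norm e w).trans (mul_le_mul_of_nonneg_left hw (norm_nonneg e))
  have hww : ‖w‖ ^ 2 ≤ ‖n‖ ^ 2 := pow_le_pow_left₀ (norm_nonneg w) hw 2
  nlinarith [sq_nonneg (2 * ‖n‖ - 3 * ‖e‖)]

theorem prox_gradient_model_le {L : ℝ} (hL : 0 < L) {v ghat p q : F}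
    (hpq : ‖q - p‖ ≤ ‖v + ghat‖) :
    5 / 6 * ⟪p, -((1 / L) • (v + ghat))⟫ + 1 / 6 * ⟪q, -((1 / L) • (v + ghat))⟫
        + ⟪v, -((1 / L) • (v + ghat))⟫ + L / 2 * ‖-((1 / L) • (v + ghat))‖ ^ 2
      ≤ -(1 / (12 * L)) * ‖v + q‖ ^ 2 + 5 / (6 * L) * ‖p - ghat‖ ^ 2 := by
  set n := v + ghat
  have hkey := norm_add_add_sq_le_of_norm_le (e := p - ghat) hpq
  have hsum : n + (p - ghat) + (q - p) = v + q := by simp only [n]; abel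
  rw [hsum, inner_sub_left, inner_sub_left] at hkey
  have hn : ‖n‖ ^ 2 = ⟪v, n⟫ + ⟪ghat, n⟫ := by
    rw [← real_inner_self_eq_norm_sq, inner_add_left]
  simp only [inner_neg_right, inner_smul_right, norm_neg, norm_smul, Real.norm_of_nonneg
    (one_div_pos.2 hL).le]
  calc _ = 1 / L * (-(5 / 6) * ⟪p, n⟫ - 1 / 6 * ⟪q, n⟫ - ⟪v, n⟫ + 1 / 2 * ‖n‖ ^ 2) := by
          field_simp; ring
    _ ≤ 1 / L * (-(1 / 12) * ‖v + q‖ ^ 2 + 5 / 6 * ‖p - ghat‖ ^ 2) :=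
          mul_le_mul_of_nonneg_left (by linarith) (by positivity)
    _ = _ := by ring

end InnerProductInequalities

theorem prox_descent_v3_general {d : ℕ} (L : ℝ) (hL : 0 < L)
    (f r : EuclideanSpace ℝ (Fin d) → ℝ)
    (hdiff : Differentiable ℝ f)
    (hlip : ∀ x y, ‖gradient f x - gradient f y‖ ≤ L * ‖x - y‖)
    (xk xk1 ghat v : EuclideanSpace ℝ (Fin d))
    (hsub : ∀ y, r xk1 + ⟪v, y - xk1⟫ ≤ r y)
    (hstep : xk1 = xk - (1 / L) • (v + ghat)) :
    f xk1 + r xk1 ≤ f xk + r xk - (1 / (12 * L)) * ‖v + gradient f xk1‖ ^ 2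
      + (5 / (6 * L)) * ‖gradient f xk - ghat‖ ^ 2 := by
  have hu : xk1 - xk = -((1 / L) • (v + ghat)) := by rw [hstep, sub_sub_cancel_left]
  have hfwd := le_add_inner_gradient_add_sq hdiff hlip xk xk1
  have hbwd := le_add_inner_gradient_add_sq' hdiff hlip xk xk1
  have hprox : r xk1 ≤ r xk + ⟪v, xk1 - xk⟫ := by
    have := hsub xk
    rw [← neg_sub, inner_neg_right] at this
    linarith
  have hgrad : ‖gradient f xk1 - gradient f xk‖ ≤ ‖v + ghat‖ := by
    calc _ ≤ L * ‖xk1 - xk‖ := hlip xk1 xk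
      _ = ‖v + ghat‖ := by
        rw [hu, norm_neg, norm_smul, Real.norm_of_nonneg (one_div_pos.2 hL).le, ← mul_assoc,
          mul_one_div_cancel hL.ne', one_mul]
  have hmodel := prox_gradient_model_le hL hgrad
  rw [hu] at hfwd hbwd hprox
  linarith

/-- Descent lemma for inexact proximal gradient, version 3. -/
theorem prox_descent_v3 {d : ℕ} (L : ℝ) (hL : 0 < L)
    (f r : EuclideanSpace ℝ (Fin d) → ℝ)
    (hdiff : Differentiable ℝ f)
    (hlip : ∀ x y, ‖gradient f x - gradient f y‖ ≤ L * ‖x - y‖)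
    (hr : ConvexOn ℝ Set.univ r)
    (xk xk1 ghat v : EuclideanSpace ℝ (Fin d))
    (hsub : ∀ y, r xk1 + ⟪v, y - xk1⟫ ≤ r y)
    (hstep : xk1 = xk - (1 / L) • (v + ghat)) :
    f xk1 + r xk1 ≤ f xk + r xk - (1 / (12 * L)) * ‖v + gradient f xk1‖ ^ 2
      + (5 / (6 * L)) * ‖gradient f xk - ghat‖ ^ 2 :=
  prox_descent_v3_general L hL f r hdiff hlip xk xk1 ghat v hsub hstep
end

section
/- Let F = f + r with f convex and L-Lipschitz differentiable and r convex, and let x_{k+1} = prox_{r/L}(x_k - (1/L) hat{g}_k). Assume F(x_{k+1}) <= F(x_k) - (1/(12L)) ||tilde{Delta}_k||_2^2 + (5/(6L)) ||g_k - hat{g}_k||_2^2, where tilde{Delta}_k = -(tilde{nabla} r(x_{k+1}) + nabla f(x_{k+1})). Then the errors e_k = F(x_k) - min F satisfy e_{k+1} + e_{k+1}^2 / (12 L ||x_{k+1} - P_*(x_{k+1})||_2^2) <= e_k + (5/(6L)) ||g_k - hat{g}_k||_2^2. -/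
open scoped RealInnerProductSpace

/-!
By the subgradient inequality at the minimizer `p` and Cauchy–Schwarz,
`0 ≤ e ≤ ‖Δ‖ ‖x_{k+1} - p‖`, so `e² / (12 L ‖x_{k+1} - p‖²) ≤ ‖Δ‖² / (12 L)`;
adding this to the descent inequality gives the recursion.
-/

theorem sub_le_norm_mul_norm_of_subgradient {E : Type*} [NormedAddCommGroup E]
    [InnerProductSpace ℝ E] {F : E → ℝ} {x p g : E} (h : F x + ⟪g, p - x⟫ ≤ F p) :
    F x - F p ≤ ‖g‖ * ‖x - p‖ := by
  have hcs : ⟪g, x - p⟫ ≤ ‖g‖ * ‖x - p‖ := real_inner_le_norm g (x - p)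
  have hflip : ⟪g, p - x⟫ = -⟪g, x - p⟫ := by rw [← inner_neg_right, neg_sub]
  linarith

theorem sq_div_mul_sq_le_of_le_mul {e a b c : ℝ} (he : 0 ≤ e) (hab : e ≤ a * b) (hc : 0 ≤ c) :
    e ^ 2 / (c * b ^ 2) ≤ a ^ 2 / c :=
  calc e ^ 2 / (c * b ^ 2) ≤ (a * b) ^ 2 / (c * b ^ 2) := by gcongr
    _ = a ^ 2 / c * (b ^ 2 / b ^ 2) := by rw [mul_pow, mul_div_mul_comm]
    _ ≤ a ^ 2 / c := mul_le_of_le_one_right (by positivity) (div_self_le_one _)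

theorem prox_error_recursion_general {d : ℕ} (L err : ℝ) (hL : 0 < L)
    (F : EuclideanSpace ℝ (Fin d) → ℝ)
    (xk xk1 p : EuclideanSpace ℝ (Fin d)) (Δ : EuclideanSpace ℝ (Fin d))
    (hp : ∀ y, F p ≤ F y)
    (hsub : ∀ y, F xk1 + ⟪-Δ, y - xk1⟫ ≤ F y)
    (hdesc : F xk1 ≤ F xk - (1 / (12 * L)) * ‖Δ‖ ^ 2 + (5 / (6 * L)) * err) :
    (F xk1 - F p) + (F xk1 - F p) ^ 2 / (12 * L * ‖xk1 - p‖ ^ 2)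
      ≤ (F xk - F p) + (5 / (6 * L)) * err := by
  have hgap : F xk1 - F p ≤ ‖Δ‖ * ‖xk1 - p‖ := by
    simpa only [norm_neg] using sub_le_norm_mul_norm_of_subgradient (hsub p)
  have hquad : (F xk1 - F p) ^ 2 / (12 * L * ‖xk1 - p‖ ^ 2) ≤ ‖Δ‖ ^ 2 / (12 * L) :=
    sq_div_mul_sq_le_of_le_mul (sub_nonneg.2 (hp xk1)) hgap (by positivity)
  rw [one_div_mul_eq_div] at hdesc
  linarith

/-- One-step inequality for the errors of inexact proximal gradient descent. -/
theorem prox_error_recursion {d : ℕ} (L err : ℝ) (hL : 0 < L) (herr : 0 ≤ err)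
    (F : EuclideanSpace ℝ (Fin d) → ℝ) (hconv : ConvexOn ℝ Set.univ F)
    (xk xk1 p : EuclideanSpace ℝ (Fin d)) (Δ : EuclideanSpace ℝ (Fin d))
    (hp : ∀ y, F p ≤ F y)
    (hproj : ∀ q, (∀ y, F q ≤ F y) → ‖xk1 - p‖ ≤ ‖xk1 - q‖)
    (hsub : ∀ y, F xk1 + ⟪-Δ, y - xk1⟫ ≤ F y)
    (hdesc : F xk1 ≤ F xk - (1 / (12 * L)) * ‖Δ‖ ^ 2 + (5 / (6 * L)) * err) :
    (F xk1 - F p) + (F xk1 - F p) ^ 2 / (12 * L * ‖xk1 - p‖ ^ 2)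
      ≤ (F xk - F p) + (5 / (6 * L)) * err :=
  prox_error_recursion_general L err hL F xk xk1 p Δ hp hsub hdesc
end

section
/- A continuously differentiable function f: R^d -> R (with d >= 2) whose gradient is everywhere s-sparse for some s < d cannot be strongly convex: there is no mu > 0 such that f(y) - f(x) >= <nabla f(x), y - x> + (mu/2)||y - x||_2^2 for all x, y. -/
open scoped RealInnerProductSpace Gradient
open Filter

/-!
Strong convexity makes the gradient map surjective: for any `b`, the tilted function
`x ↦ f x - ⟪b, x⟫` is still strongly convex, hence coercive, so it attains a minimum at some `a`,
where `∇ f a = b`. Taking `b` with all coordinates nonzero gives a gradient with `d > s` nonzero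
entries.
-/

variable {E : Type*} [NormedAddCommGroup E] [InnerProductSpace ℝ E]

theorem tendsto_cocompact_atTop_of_quadratic_lower_bound [ProperSpace E] {g : E → ℝ} {c μ : ℝ}
    {v : E} (hμ : 0 < μ) (hg : ∀ y, c + ⟪v, y⟫ + μ / 2 * ‖y‖ ^ 2 ≤ g y) :
    Tendsto g (cocompact E) atTop := by
  have hlower : ∀ y, ‖y‖ * (μ / 2 * ‖y‖ - ‖v‖) + c ≤ g y := fun y => by
    have := neg_le_of_abs_le (abs_real_inner_le_norm v y)
    linarith [hg y]
  have hq : Tendsto (fun r : ℝ => r * (μ / 2 * r - ‖v‖) + c) atTop atTop :=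
    tendsto_atTop_add_const_right _ c <| tendsto_id.atTop_mul_atTop₀ <|
      tendsto_atTop_add_const_right _ _ (tendsto_id.const_mul_atTop (half_pos hμ))
  exact tendsto_atTop_mono hlower (hq.comp tendsto_norm_cocompact_atTop)

theorem gradient_eq_of_isLocalMin_sub_inner [CompleteSpace E] {f : E → ℝ} {a b : E}
    (hf : DifferentiableAt ℝ f a) (hmin : IsLocalMin (fun x => f x - ⟪b, x⟫) a) : ∇ f a = b := by
  have hzero := hmin.hasFDerivAt_eq_zero (hf.hasFDerivAt.sub (innerSL ℝ b).hasFDerivAt)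
  refine ext_inner_right ℝ fun y => ?_
  rw [inner_gradient_left, ← sub_eq_zero]
  simpa using congrArg (· y) hzero

theorem surjective_gradient_of_strongly_convex [FiniteDimensional ℝ E] {f : E → ℝ} {μ : ℝ}
    (hf : Differentiable ℝ f) (hμ : 0 < μ)
    (hsc : ∀ x y, f x + ⟪∇ f x, y - x⟫ + μ / 2 * ‖y - x‖ ^ 2 ≤ f y) :
    Function.Surjective (∇ f) := by
  intro b
  set g : E → ℝ := fun x => f x - ⟪b, x⟫
  have hcoercive : Tendsto g (cocompact E) atTop := by
    refine tendsto_cocompact_atTop_of_quadratic_lower_bound (c := f 0) (v := ∇ f 0 - b) hμ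
      fun y => ?_
    have := hsc 0 y
    simp only [g, sub_zero, inner_sub_left] at this ⊢
    linarith
  obtain ⟨a, ha⟩ := (hf.continuous.sub (continuous_const.inner continuous_id)).exists_forall_le
    hcoercive
  exact ⟨a, gradient_eq_of_isLocalMin_sub_inner (hf a) (Eventually.of_forall ha)⟩

theorem sparse_gradients_not_strongly_convex_general {d s : ℕ} (hs : s < d)
    (f : EuclideanSpace ℝ (Fin d) → ℝ) (hf : ContDiff ℝ 1 f)
    (hsparse : ∀ x : EuclideanSpace ℝ (Fin d),
      (Finset.univ.filter fun i => gradient f x i ≠ 0).card ≤ s) :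
    ¬ ∃ μ : ℝ, 0 < μ ∧ ∀ x y : EuclideanSpace ℝ (Fin d),
      f x + ⟪gradient f x, y - x⟫ + μ / 2 * ‖y - x‖ ^ 2 ≤ f y := by
  rintro ⟨μ, hμ, hsc⟩
  obtain ⟨a, ha⟩ := surjective_gradient_of_strongly_convex (hf.differentiable one_ne_zero) hμ hsc
    (WithLp.toLp 2 fun _ => 1)
  have hdense := hsparse a
  simp only [ha, PiLp.toLp_apply, ne_eq, one_ne_zero, not_false_eq_true, Finset.filter_true,
    Finset.card_univ, Fintype.card_fin] at hdense
  omega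

/-- A continuously differentiable function with everywhere s-sparse gradients (s < d,
d ≥ 2) cannot be strongly convex. -/
theorem sparse_gradients_not_strongly_convex {d s : ℕ} (hd : 2 ≤ d) (hs : s < d)
    (f : EuclideanSpace ℝ (Fin d) → ℝ) (hf : ContDiff ℝ 1 f)
    (hsparse : ∀ x : EuclideanSpace ℝ (Fin d),
      (Finset.univ.filter fun i => gradient f x i ≠ 0).card ≤ s) :
    ¬ ∃ μ : ℝ, 0 < μ ∧ ∀ x y : EuclideanSpace ℝ (Fin d),
      f x + ⟪gradient f x, y - x⟫ + μ / 2 * ‖y - x‖ ^ 2 ≤ f y :=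
  sparse_gradients_not_strongly_convex_general hs f hf hsparse
end

section
/- If Z is an m x d matrix satisfying the restricted isometry property of order 4s with constant delta_{4s} < 1, then for every vector v in R^d (not necessarily sparse), ||Z v||_2 <= sqrt(1 + delta_{4s}) (||v||_2 + ||v||_1 / sqrt(s)). -/
/-!
Split `v` into blocks `T₀, T₁, …` of `s` coordinates each, taken in decreasing order of `|v j|`.
Each block is `s`-sparse, so `‖A v_{Tₖ}‖ ≤ C ‖v_{Tₖ}‖₂`. Every entry on `Tₖ₊₁` is at most the
average `‖v_{Tₖ}‖₁ / s` of the entries on `Tₖ`, hence `‖v_{Tₖ₊₁}‖₂ ≤ ‖v_{Tₖ}‖₁ / √s`. Summing,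
with `‖v_{T₀}‖₂ ≤ ‖v‖₂` for the first block, gives `‖A v‖ ≤ C (‖v‖₂ + ‖v‖₁ / √s)`. The blocks are
peeled off by induction on the size of the support, carrying an entrywise bound `M` on the rest.
-/

open Finset

lemma Finset.exists_subset_card_eq_forall_le {ι α : Type*} [DecidableEq ι] [LinearOrder α]
    (S : Finset ι) (f : ι → α) {k : ℕ} (hk : k ≤ #S) :
    ∃ T ⊆ S, #T = k ∧ ∀ i ∈ T, ∀ j ∈ S \ T, f j ≤ f i := by
  induction k with
  | zero => exact ⟨∅, empty_subset S, card_empty, by simp⟩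
  | succ k ih =>
    obtain ⟨T, hTS, rfl, hT⟩ := ih (Nat.le_of_succ_le hk)
    obtain ⟨a, ha, ha_max⟩ := exists_max_image (S \ T) f <| by
      rw [← card_pos, card_sdiff_of_subset hTS]; omega
    obtain ⟨haS, haT⟩ := mem_sdiff.1 ha
    refine ⟨insert a T, insert_subset haS hTS, card_insert_of_notMem haT, ?_⟩
    intro i hi j hj
    have hj' : j ∈ S \ T := sdiff_subset_sdiff subset_rfl (subset_insert a T) hj
    rcases mem_insert.1 hi with rfl | hiT
    · exact ha_max j hj'
    · exact hT i hiT j hj'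

variable {ι : Type*} [Fintype ι]

lemma exists_top_block (v : ι → ℝ) (s : ℕ) :
    ∃ T : Finset ι, T ⊆ ({j | v j ≠ 0} : Finset ι) ∧ #T ≤ s ∧ (v ≠ 0 → 0 < s → T.Nonempty) ∧
      ∀ j ∉ T, s * |v j| ≤ ∑ i ∈ T, |v i| := by
  classical
  set S : Finset ι := {j | v j ≠ 0}
  obtain ⟨T, hTS, hTcard, hT⟩ :=
    S.exists_subset_card_eq_forall_le (fun j => |v j|) (min_le_right s #S)
  refine ⟨T, hTS, hTcard ▸ min_le_left s #S, fun hv hs => ?_, fun j hj => ?_⟩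
  · obtain ⟨j, hj⟩ := Function.ne_iff.1 hv
    have : 0 < #S := card_pos.2 ⟨j, by simpa [S] using hj⟩
    exact card_pos.1 (by omega)
  · by_cases hjS : j ∈ S
    · have hTs : #T = s := by
        have := card_lt_card (ssubset_of_subset_of_ne hTS (by rintro rfl; exact hj hjS))
        omega
      simpa [hTs] using card_nsmul_le_sum T _ _ fun i hi => hT i hi j (mem_sdiff.2 ⟨hjS, hj⟩)
    · have : v j = 0 := by simpa [S] using hjS
      simp only [this, abs_zero, mul_zero]
      exact sum_nonneg fun i _ => abs_nonneg _

lemma sqrt_sum_sq_le_of_card_support_le {v : ι → ℝ} {s : ℕ} {M : ℝ}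
    (hv : #{j | v j ≠ 0} ≤ s) (hM0 : 0 ≤ M) (hM : ∀ j, |v j| ≤ M) :
    √(∑ j, v j ^ 2) ≤ √s * M := by
  have : ∑ j, v j ^ 2 ≤ s * M ^ 2 := by
    calc ∑ j, v j ^ 2 = ∑ j with v j ≠ 0, v j ^ 2 :=
          (sum_filter_of_ne fun j _ h => by simpa using h).symm
      _ ≤ #{j | v j ≠ 0} * M ^ 2 := by
          simpa using sum_le_card_nsmul _ _ _ fun j _ => sq_le_sq.2 ((hM j).trans (le_abs_self M))
      _ ≤ s * M ^ 2 := by gcongr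
  calc √(∑ j, v j ^ 2) ≤ √(s * M ^ 2) := Real.sqrt_le_sqrt this
    _ = √s * M := by rw [Real.sqrt_mul (Nat.cast_nonneg s), Real.sqrt_sq hM0]

lemma card_support_indicator_le (v : ι → ℝ) (T : Finset ι) :
    #{j | (T : Set ι).indicator v j ≠ 0} ≤ #T :=
  card_le_card fun j hj => by
    simpa using (Set.indicator_apply_ne_zero.1 (mem_filter.1 hj).2).1

lemma card_support_indicator_compl_lt {v : ι → ℝ} {T : Finset ι}
    (hT : T ⊆ ({j | v j ≠ 0} : Finset ι)) (hne : T.Nonempty) :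
    #{j | (T : Set ι)ᶜ.indicator v j ≠ 0} < #{j | v j ≠ 0} := by
  classical
  calc #{j | (T : Set ι)ᶜ.indicator v j ≠ 0} ≤ #(({j | v j ≠ 0} : Finset ι) \ T) :=
        card_le_card fun j hj => by
          obtain ⟨hjT, hjv⟩ := Set.indicator_apply_ne_zero.1 (mem_filter.1 hj).2
          exact mem_sdiff.2 ⟨by simpa using hjv, by simpa using hjT⟩
    _ < #{j | v j ≠ 0} := card_lt_card (sdiff_ssubset hT hne)

lemma sum_abs_indicator_add_sum_abs_indicator_compl (v : ι → ℝ) (T : Finset ι) :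
    ∑ i ∈ T, |v i| + ∑ j, |(T : Set ι)ᶜ.indicator v j| = ∑ j, |v j| := by
  classical
  rw [← sum_add_sum_compl T (fun j => |v j|), ← coe_compl,
    ← sum_indicator_subset _ (subset_univ Tᶜ)]
  simp only [Set.indicator_apply, apply_ite, abs_zero]

section

variable {E : Type*} [SeminormedAddCommGroup E] (A : (ι → ℝ) →+ E) {C : ℝ} {s : ℕ}

lemma norm_apply_le_of_top_block (hs : 0 < s)
    (hA : ∀ v : ι → ℝ, #{j | v j ≠ 0} ≤ s → ‖A v‖ ≤ C * √(∑ j, v j ^ 2))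
    {v : ι → ℝ} {T : Finset ι} (hT : #T ≤ s) (hdom : ∀ j ∉ T, s * |v j| ≤ ∑ i ∈ T, |v i|)
    (htail : ∀ M, 0 ≤ M → (∀ j, |(T : Set ι)ᶜ.indicator v j| ≤ M) →
      ‖A ((T : Set ι)ᶜ.indicator v)‖ ≤
        C * (√s * M + (∑ j, |(T : Set ι)ᶜ.indicator v j|) / √s)) :
    ‖A v‖ ≤ C * (√(∑ j, (T : Set ι).indicator v j ^ 2) + (∑ j, |v j|) / √s) := by
  set head := (T : Set ι).indicator v
  set tail := (T : Set ι)ᶜ.indicator v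
  have hs' : (0 : ℝ) < s := Nat.cast_pos.2 hs
  have htail_le : ∀ j, |tail j| ≤ (∑ i ∈ T, |v i|) / s := by
    intro j
    by_cases hj : j ∈ T
    · simp only [tail, Set.indicator_of_notMem (Set.notMem_compl_iff.2 hj), abs_zero]
      positivity
    · rw [show tail j = v j from Set.indicator_of_mem (Set.mem_compl (mod_cast hj)) v,
        le_div_iff₀ hs', mul_comm]
      exact hdom j hj
  have hsqrt : √s * ((∑ i ∈ T, |v i|) / s) = (∑ i ∈ T, |v i|) / √s := by
    rw [mul_div_left_comm, Real.sqrt_div_self', mul_one_div]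
  calc ‖A v‖ = ‖A head + A tail‖ := by rw [← map_add, Set.indicator_self_add_compl]
    _ ≤ ‖A head‖ + ‖A tail‖ := norm_add_le _ _
    _ ≤ C * √(∑ j, head j ^ 2) +
          C * (√s * ((∑ i ∈ T, |v i|) / s) + (∑ j, |tail j|) / √s) :=
        add_le_add (hA head ((card_support_indicator_le v T).trans hT))
          (htail _ (by positivity) htail_le)
    _ = C * (√(∑ j, head j ^ 2) + (∑ j, |v j|) / √s) := by
        rw [hsqrt, ← sum_abs_indicator_add_sum_abs_indicator_compl v T]
        ring

lemma norm_apply_le_of_abs_le (hC : 0 ≤ C) (hs : 0 < s)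
    (hA : ∀ v : ι → ℝ, #{j | v j ≠ 0} ≤ s → ‖A v‖ ≤ C * √(∑ j, v j ^ 2))
    (v : ι → ℝ) {M : ℝ} (hM : 0 ≤ M) (hvM : ∀ j, |v j| ≤ M) :
    ‖A v‖ ≤ C * (√s * M + (∑ j, |v j|) / √s) := by
  induction hn : #{j | v j ≠ 0} using Nat.strong_induction_on generalizing v M with
  | _ n ih =>
  by_cases hv : v = 0
  · subst hv
    simp only [map_zero, norm_zero, Pi.zero_apply, abs_zero, sum_const_zero, zero_div, add_zero]
    positivity
  obtain ⟨T, hT_supp, hTs, hT_ne, hdom⟩ := exists_top_block v s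
  have hhead : ∀ j, |(T : Set ι).indicator v j| ≤ M := fun j => by
    by_cases hj : j ∈ (T : Set ι)
    · rw [Set.indicator_of_mem hj]; exact hvM j
    · rw [Set.indicator_of_notMem hj, abs_zero]; exact hM
  calc ‖A v‖ ≤ C * (√(∑ j, (T : Set ι).indicator v j ^ 2) + (∑ j, |v j|) / √s) :=
        norm_apply_le_of_top_block A hs hA hTs hdom fun M' hM' htail =>
          ih _ (hn ▸ card_support_indicator_compl_lt hT_supp (hT_ne hv hs)) _ hM' htail rfl
    _ ≤ C * (√s * M + (∑ j, |v j|) / √s) := by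
        gcongr
        exact sqrt_sum_sq_le_of_card_support_le
          ((card_support_indicator_le v T).trans hTs) hM hhead

theorem norm_apply_le_sqrt_sum_sq_add_sum_abs_div (hC : 0 ≤ C) (hs : 0 < s)
    (hA : ∀ v : ι → ℝ, #{j | v j ≠ 0} ≤ s → ‖A v‖ ≤ C * √(∑ j, v j ^ 2)) (v : ι → ℝ) :
    ‖A v‖ ≤ C * (√(∑ j, v j ^ 2) + (∑ j, |v j|) / √s) := by
  obtain ⟨T, -, hTs, -, hdom⟩ := exists_top_block v s
  calc ‖A v‖ ≤ C * (√(∑ j, (T : Set ι).indicator v j ^ 2) + (∑ j, |v j|) / √s) :=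
        norm_apply_le_of_top_block A hs hA hTs hdom fun _ hM htail =>
          norm_apply_le_of_abs_le A hC hs hA _ hM htail
    _ ≤ C * (√(∑ j, v j ^ 2) + (∑ j, |v j|) / √s) := by
        gcongr C * (√?_ + _)
        refine sum_le_sum fun j _ => ?_
        by_cases hj : j ∈ (T : Set ι)
        · rw [Set.indicator_of_mem hj]
        · rw [Set.indicator_of_notMem hj, zero_pow two_ne_zero]; positivity

end

theorem RIP_extends_to_all_vectors_general {m d : ℕ} (s : ℕ) (hs : 1 ≤ s)
    (δ : ℝ)
    (Z : Matrix (Fin m) (Fin d) ℝ)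
    (hRIP : ∀ v : Fin d → ℝ, (Finset.univ.filter fun j => v j ≠ 0).card ≤ 4 * s →
      (1 - δ) * (∑ j, v j ^ 2) ≤ ∑ i, Z.mulVec v i ^ 2 ∧
      ∑ i, Z.mulVec v i ^ 2 ≤ (1 + δ) * (∑ j, v j ^ 2)) :
    ∀ v : Fin d → ℝ, Real.sqrt (∑ i, Z.mulVec v i ^ 2) ≤
      Real.sqrt (1 + δ) * (Real.sqrt (∑ j, v j ^ 2) + (∑ j, |v j|) / Real.sqrt s) := by
  let A : (Fin d → ℝ) →+ EuclideanSpace ℝ (Fin m) :=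
    ((WithLp.linearEquiv 2 ℝ (Fin m → ℝ)).symm.toLinearMap ∘ₗ Z.mulVecLin).toAddMonoidHom
  have hA (v : Fin d → ℝ) : ‖A v‖ = √(∑ i, Z.mulVec v i ^ 2) := by
    simp [A, EuclideanSpace.norm_eq]
  have hsparse (v : Fin d → ℝ) (hv : #{j | v j ≠ 0} ≤ s) :
      ‖A v‖ ≤ √(1 + δ) * √(∑ j, v j ^ 2) := by
    rw [hA, ← Real.sqrt_mul' _ (sum_nonneg fun j _ => sq_nonneg (v j))]
    exact Real.sqrt_le_sqrt (hRIP v (by omega)).2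
  intro v
  rw [← hA]
  exact norm_apply_le_sqrt_sum_sq_add_sum_abs_div A (Real.sqrt_nonneg _) hs hsparse v

/-- The upper RIP bound extends from 4s-sparse vectors to arbitrary vectors. -/
theorem RIP_extends_to_all_vectors {m d : ℕ} (s : ℕ) (hs : 1 ≤ s)
    (δ : ℝ) (hδ0 : 0 < δ) (hδ1 : δ < 1)
    (Z : Matrix (Fin m) (Fin d) ℝ)
    (hRIP : ∀ v : Fin d → ℝ, (Finset.univ.filter fun j => v j ≠ 0).card ≤ 4 * s →
      (1 - δ) * (∑ j, v j ^ 2) ≤ ∑ i, Z.mulVec v i ^ 2 ∧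
      ∑ i, Z.mulVec v i ^ 2 ≤ (1 + δ) * (∑ j, v j ^ 2)) :
    ∀ v : Fin d → ℝ, Real.sqrt (∑ i, Z.mulVec v i ^ 2) ≤
      Real.sqrt (1 + δ) * (Real.sqrt (∑ j, v j ^ 2) + (∑ j, |v j|) / Real.sqrt s) :=
  RIP_extends_to_all_vectors_general s hs δ Z hRIP
end
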